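/- arXiv:2102.08722 — 7 statements merged into one kernel-verified Lean document; each statement's English description precedes it below -/
import Mathlib

section
/- Let A and B be d×d Hermitian matrices with eigenvalues η₁(A) ≥ ... ≥ η_d(A) and η₁(B) ≥ ... ≥ η_d(B). Then ∑ᵢ ηᵢ(A)·η_{d-i+1}(B) ≤ Tr(AB) ≤ ∑ᵢ ηᵢ(A)·ηᵢ(B). -/
/-!
Diagonalize `A = U diag(α) U*` and `B = V diag(β) V*`. Then `Re tr(AB) = ∑ᵢⱼ αᵢ βⱼ |Wᵢⱼ|²` with
`W = U*V` unitary, so `S = (|Wᵢⱼ|²)` is doubly stochastic and `Re tr(AB) = α ⬝ S β`. By Birkhoff's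
theorem this linear function of `S` is bounded above and below by its values at permutation
matrices, i.e. by pairings `∑ᵢ αᵢ β_{σ(i)}`; the rearrangement inequality bounds these between the
oppositely ordered and the similarly ordered pairing.
-/

open Matrix Finset

namespace Matrix

variable {n 𝕜 : Type*} [Fintype n] [DecidableEq n] [RCLike 𝕜]

theorem sum_norm_sq_row_of_mem_unitaryGroup {U : Matrix n n 𝕜}
    (hU : U ∈ unitaryGroup n 𝕜) (i : n) : ∑ j, ‖U i j‖ ^ 2 = 1 := by
  have h : (U * star U) i i = 1 := by rw [Unitary.mul_star_self_of_mem hU, one_apply_eq]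
  simp only [mul_apply, star_apply, ← starRingEnd_apply, RCLike.mul_conj] at h
  exact_mod_cast h

theorem map_norm_sq_mem_doublyStochastic_of_mem_unitaryGroup {U : Matrix n n 𝕜}
    (hU : U ∈ unitaryGroup n 𝕜) : U.map (‖·‖ ^ 2) ∈ doublyStochastic ℝ n := by
  refine mem_doublyStochastic_iff_sum.mpr ⟨fun _ _ => sq_nonneg _,
    sum_norm_sq_row_of_mem_unitaryGroup hU, fun j => ?_⟩
  simpa [star_apply] using sum_norm_sq_row_of_mem_unitaryGroup (Unitary.star_mem hU) j

theorem re_trace_diagonal_mul_mul_diagonal_mul_star (x y : n → ℝ) (M : Matrix n n 𝕜) :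
    RCLike.re (diagonal (RCLike.ofReal ∘ x) * M * diagonal (RCLike.ofReal ∘ y) * star M).trace =
      x ⬝ᵥ M.map (‖·‖ ^ 2) *ᵥ y := by
  simp only [trace, diag_apply, mul_apply, diagonal_apply, Function.comp_apply, ite_mul,
    zero_mul, sum_ite_eq, mem_univ, ↓reduceIte, mul_ite, mul_zero, sum_ite_eq', star_apply,
    RCLike.star_def, map_sum, RCLike.mul_re, RCLike.ofReal_re, RCLike.ofReal_im, sub_zero,
    RCLike.mul_im, add_zero, RCLike.conj_re, zero_add, RCLike.conj_im, mul_neg, sub_neg_eq_add,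
    dotProduct, mulVec, map_apply, mul_sum]
  refine sum_congr rfl fun i _ => sum_congr rfl fun j _ => ?_
  rw [RCLike.norm_sq_eq_def]
  ring

theorem IsHermitian.re_trace_mul_eq {A B : Matrix n n 𝕜} (hA : A.IsHermitian)
    (hB : B.IsHermitian) :
    RCLike.re (A * B).trace = hA.eigenvalues ⬝ᵥ
      (star (hA.eigenvectorUnitary : Matrix n n 𝕜) * hB.eigenvectorUnitary).map (‖·‖ ^ 2) *ᵥ
        hB.eigenvalues := by
  rw [← re_trace_diagonal_mul_mul_diagonal_mul_star]
  set U : Matrix n n 𝕜 := ↑hA.eigenvectorUnitary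
  set V : Matrix n n 𝕜 := ↑hB.eigenvectorUnitary
  set DA : Matrix n n 𝕜 := diagonal (RCLike.ofReal ∘ hA.eigenvalues)
  set DB : Matrix n n 𝕜 := diagonal (RCLike.ofReal ∘ hB.eigenvalues)
  have hAB : A * B = U * (DA * star U * V * DB * star V) := by
    conv_lhs => rw [hA.spectral_theorem, hB.spectral_theorem]
    simp only [Unitary.conjStarAlgAut_apply, mul_assoc]
    rfl
  rw [hAB, trace_mul_comm]
  simp only [star_mul, star_star, mul_assoc]

section DoublyStochastic

variable {R : Type*} [Field R] [LinearOrder R] [IsStrictOrderedRing R]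

theorem exists_perm_dotProduct_mulVec_le {S : Matrix n n R} (hS : S ∈ doublyStochastic R n)
    (x y : n → R) : ∃ σ : Equiv.Perm n, x ⬝ᵥ S *ᵥ y ≤ x ⬝ᵥ y ∘ σ := by
  rw [← SetLike.mem_coe, doublyStochastic_eq_convexHull_permMatrix] at hS
  let f : Matrix n n R →ₗ[R] R :=
    { toFun S := x ⬝ᵥ S *ᵥ y
      map_add' S T := by simp only [add_mulVec, dotProduct_add]
      map_smul' c S := by simp only [smul_mulVec, dotProduct_smul, RingHom.id_apply] }
  obtain ⟨_, ⟨σ, rfl⟩, h⟩ :=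
    (f.convexOn convex_univ).exists_ge_of_mem_convexHull (Set.subset_univ _) hS
  exact ⟨σ, by simpa [f, permMatrix_mulVec] using h⟩

theorem exists_perm_le_dotProduct_mulVec {S : Matrix n n R} (hS : S ∈ doublyStochastic R n)
    (x y : n → R) : ∃ σ : Equiv.Perm n, x ⬝ᵥ y ∘ σ ≤ x ⬝ᵥ S *ᵥ y := by
  simpa [neg_dotProduct] using exists_perm_dotProduct_mulVec_le hS (-x) y

end DoublyStochastic

end Matrix

section Rearrangement

variable {ι α : Type*} [Fintype ι] [CommRing α] [LinearOrder α] [IsStrictOrderedRing α]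
  {f g : ι → α} {σ τ : Equiv.Perm ι}

theorem dotProduct_comp_perm_le_of_monovary (h : Monovary (f ∘ σ) (g ∘ τ)) (π : Equiv.Perm ι) :
    f ⬝ᵥ g ∘ π ≤ f ∘ σ ⬝ᵥ g ∘ τ :=
  calc f ⬝ᵥ g ∘ π = ∑ i, (f ∘ σ) i * (g ∘ τ) ((σ.trans (π.trans τ.symm)) i) := by
        simp [dotProduct, ← Equiv.sum_comp σ (fun i => f i * g (π i))]
    _ ≤ f ∘ σ ⬝ᵥ g ∘ τ := h.sum_mul_comp_perm_le_sum_mul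

theorem le_dotProduct_comp_perm_of_antivary (h : Antivary (f ∘ σ) (g ∘ τ)) (π : Equiv.Perm ι) :
    f ∘ σ ⬝ᵥ g ∘ τ ≤ f ⬝ᵥ g ∘ π :=
  calc f ∘ σ ⬝ᵥ g ∘ τ ≤ ∑ i, (f ∘ σ) i * (g ∘ τ) ((σ.trans (π.trans τ.symm)) i) :=
        h.sum_mul_le_sum_mul_comp_perm
    _ = f ⬝ᵥ g ∘ π := by simp [dotProduct, ← Equiv.sum_comp σ (fun i => f i * g (π i))]

end Rearrangement

/-- Ruhe's trace inequality (von Neumann trace inequality for Hermitian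
matrices): if `a` and `b` are the decreasingly ordered eigenvalue sequences
of Hermitian matrices `A` and `B`, then
`∑ aᵢ b_{d-i+1} ≤ Tr(AB) ≤ ∑ aᵢ bᵢ`. -/
theorem ruhe_trace_inequality
    (d : ℕ) (A B : Matrix (Fin d) (Fin d) ℂ)
    (hA : A.IsHermitian) (hB : B.IsHermitian)
    (a b : Fin d → ℝ) (ha : Antitone a) (hb : Antitone b)
    (haeig : ∃ e : Equiv.Perm (Fin d), a = hA.eigenvalues ∘ e)
    (hbeig : ∃ e : Equiv.Perm (Fin d), b = hB.eigenvalues ∘ e) :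
    (∑ i, a i * b i.rev) ≤ ((A * B).trace).re ∧
      ((A * B).trace).re ≤ ∑ i, a i * b i := by
  obtain ⟨e, rfl⟩ := haeig
  obtain ⟨f, rfl⟩ := hbeig
  have hS := map_norm_sq_mem_doublyStochastic_of_mem_unitaryGroup <|
    mul_mem (Unitary.star_mem hA.eigenvectorUnitary.2) hB.eigenvectorUnitary.2
  obtain ⟨σ, hσ⟩ := exists_perm_dotProduct_mulVec_le hS hA.eigenvalues hB.eigenvalues
  obtain ⟨τ, hτ⟩ := exists_perm_le_dotProduct_mulVec hS hA.eigenvalues hB.eigenvalues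
  rw [← RCLike.re_to_complex, hA.re_trace_mul_eq hB]
  have hrev : Antivary (hA.eigenvalues ∘ e) (hB.eigenvalues ∘ Fin.revPerm.trans f) :=
    ha.antivary fun _ _ hij => hb (Fin.rev_le_rev.mpr hij)
  exact ⟨(le_dotProduct_comp_perm_of_antivary hrev τ).trans hτ,
    hσ.trans (dotProduct_comp_perm_le_of_monovary (ha.monovary hb) σ)⟩
end

section
/- Let A₁, A₂, B₁, B₂ be Hermitian operators on finite-dimensional Hilbert spaces with A₁² = A₂² = 1 and B₁² = B₂² = 1. Define the CHSH operator I = A₁⊗B₁ + A₁⊗B₂ + A₂⊗B₁ − A₂⊗B₂. Then I² = 4·(1⊗1) − [A₁,A₂]⊗[B₁,B₂]. -/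
open Kronecker

/-- Landau's identity: for Hermitian involutions `A₁, A₂, B₁, B₂`, the CHSH
operator `I = A₁⊗B₁ + A₁⊗B₂ + A₂⊗B₁ - A₂⊗B₂` satisfies
`I² = 4·(1⊗1) - [A₁,A₂]⊗[B₁,B₂]`. -/
theorem landau_identity
    (m n : ℕ)
    (A₁ A₂ : Matrix (Fin m) (Fin m) ℂ) (B₁ B₂ : Matrix (Fin n) (Fin n) ℂ)
    (hA₁ : A₁.IsHermitian) (hA₂ : A₂.IsHermitian)
    (hB₁ : B₁.IsHermitian) (hB₂ : B₂.IsHermitian)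
    (hA₁sq : A₁ * A₁ = 1) (hA₂sq : A₂ * A₂ = 1)
    (hB₁sq : B₁ * B₁ = 1) (hB₂sq : B₂ * B₂ = 1)
    (I : Matrix (Fin m × Fin n) (Fin m × Fin n) ℂ)
    (hI : I = A₁ ⊗ₖ B₁ + A₁ ⊗ₖ B₂ + A₂ ⊗ₖ B₁ - A₂ ⊗ₖ B₂) :
    I * I = (4 : ℂ) • ((1 : Matrix (Fin m) (Fin m) ℂ) ⊗ₖ (1 : Matrix (Fin n) (Fin n) ℂ))
      - (A₁ * A₂ - A₂ * A₁) ⊗ₖ (B₁ * B₂ - B₂ * B₁) := by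
  subst hI
  simp only [Matrix.add_mul, Matrix.sub_mul, Matrix.mul_add, Matrix.mul_sub,
    ← Matrix.mul_kronecker_mul, hA₁sq, hA₂sq, hB₁sq, hB₂sq]
  have hsub : (A₁ * A₂ - A₂ * A₁) ⊗ₖ (B₁ * B₂ - B₂ * B₁)
      = (A₁ * A₂) ⊗ₖ (B₁ * B₂) - (A₁ * A₂) ⊗ₖ (B₂ * B₁)
        - (A₂ * A₁) ⊗ₖ (B₁ * B₂) + (A₂ * A₁) ⊗ₖ (B₂ * B₁) := by
    ext ⟨i, j⟩ ⟨k, l⟩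
    simp [Matrix.kroneckerMap]
    ring
  rw [hsub]
  have h4 : (4 : ℂ) • ((1 : Matrix (Fin m) (Fin m) ℂ) ⊗ₖ (1 : Matrix (Fin n) (Fin n) ℂ))
      = (1 : Matrix (Fin m) (Fin m) ℂ) ⊗ₖ (1 : Matrix (Fin n) (Fin n) ℂ)
        + 1 ⊗ₖ 1 + 1 ⊗ₖ 1 + 1 ⊗ₖ 1 := by
    rw [show (4:ℂ) = 1+1+1+1 by norm_num]
    simp [add_smul]
  rw [h4]
  abel
end

section
/- Let A₁, A₂, B₁, B₂ be Hermitian involutions (squares equal to identity) and I the CHSH operator A₁⊗B₁ + A₁⊗B₂ + A₂⊗B₁ − A₂⊗B₂. Then the operator norm of I satisfies ‖I‖² ≤ 4 + ‖[A₁,A₂]‖·‖[B₁,B₂]‖. In particular ‖I‖ ≤ 2√2 (Tsirelson's bound). -/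
open Kronecker

/-- The ℓ²-operator norm of a square complex matrix. -/
noncomputable def matOpNorm {n : Type*} [Fintype n] [DecidableEq n]
    (M : Matrix n n ℂ) : ℝ :=
  ‖Matrix.toEuclideanCLM (𝕜 := ℂ) M‖

/-!
Put `aᵢ = Aᵢ ⊗ 1` and `bⱼ = 1 ⊗ Bⱼ`. These are self-adjoint involutions in the C⋆-algebra of
matrices over `Fin m × Fin n`, every `aᵢ` commutes with every `bⱼ`, and
`I = a₁b₁ + a₁b₂ + a₂b₁ - a₂b₂`.
For such elements of any C⋆-ring, `I² = 4 - [a₁, a₂][b₁, b₂]`, so the C⋆-identity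
`‖I‖² = ‖I * I‖` and submultiplicativity give `‖I‖² ≤ 4 + ‖[a₁, a₂]‖ ‖[b₁, b₂]‖`.
Since `X ↦ X ⊗ 1` and `Y ↦ 1 ⊗ Y` are star algebra homomorphisms, they are contractive, which
bounds `‖[a₁, a₂]‖` by `‖[A₁, A₂]‖` and `‖[b₁, b₂]‖` by `‖[B₁, B₂]‖`. A self-adjoint involution
has norm at most `1`, so both commutators have norm at most `2`, and `‖I‖² ≤ 8`.
-/

def chshOperator {R : Type*} [Ring R] (a₁ a₂ b₁ b₂ : R) : R :=
  a₁ * b₁ + a₁ * b₂ + a₂ * b₁ - a₂ * b₂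

section Ring

variable {R : Type*} [Ring R] {a₁ a₂ b₁ b₂ : R}

theorem chshOperator_mul_self (ha₁ : a₁ * a₁ = 1) (ha₂ : a₂ * a₂ = 1)
    (hb₁ : b₁ * b₁ = 1) (hb₂ : b₂ * b₂ = 1)
    (h₁₁ : Commute a₁ b₁) (h₁₂ : Commute a₁ b₂) (h₂₁ : Commute a₂ b₁) (h₂₂ : Commute a₂ b₂) :
    chshOperator a₁ a₂ b₁ b₂ * chshOperator a₁ a₂ b₁ b₂ =
      4 - (a₁ * a₂ - a₂ * a₁) * (b₁ * b₂ - b₂ * b₁) := by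
  have hI : chshOperator a₁ a₂ b₁ b₂ = a₁ * (b₁ + b₂) + a₂ * (b₁ - b₂) := by
    unfold chshOperator; noncomm_ring
  set s := b₁ + b₂
  set d := b₁ - b₂
  calc _ = a₁ * s * (a₁ * s) + a₁ * s * (a₂ * d) + a₂ * d * (a₁ * s) + a₂ * d * (a₂ * d) := by
        rw [hI]; noncomm_ring
    _ = a₁ * a₁ * (s * s) + a₁ * a₂ * (s * d) + a₂ * a₁ * (d * s) + a₂ * a₂ * (d * d) := by
        rw [(h₁₁.add_right h₁₂).symm.mul_mul_mul_comm, (h₂₁.add_right h₂₂).symm.mul_mul_mul_comm,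
          (h₁₁.sub_right h₁₂).symm.mul_mul_mul_comm, (h₂₁.sub_right h₂₂).symm.mul_mul_mul_comm]
    _ = _ := by
        simp only [s, d, ha₁, ha₂, one_mul, add_mul, mul_add, sub_mul, mul_sub, hb₁, hb₂]
        rw [show (4 : R) = 1 + 1 + 1 + 1 by norm_num]
        abel

theorem IsSelfAdjoint.chshOperator [StarRing R] (ha₁ : IsSelfAdjoint a₁) (ha₂ : IsSelfAdjoint a₂)
    (hb₁ : IsSelfAdjoint b₁) (hb₂ : IsSelfAdjoint b₂)
    (h₁₁ : Commute a₁ b₁) (h₁₂ : Commute a₁ b₂) (h₂₁ : Commute a₂ b₁) (h₂₂ : Commute a₂ b₂) :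
    IsSelfAdjoint (_root_.chshOperator a₁ a₂ b₁ b₂) :=
  ((((ha₁.commute_iff hb₁).1 h₁₁).add ((ha₁.commute_iff hb₂).1 h₁₂)).add
    ((ha₂.commute_iff hb₁).1 h₂₁)).sub ((ha₂.commute_iff hb₂).1 h₂₂)

end Ring

theorem norm_mul_sub_mul_le_two {E : Type*} [NonUnitalNormedRing E] {a b : E}
    (ha : ‖a‖ ≤ 1) (hb : ‖b‖ ≤ 1) : ‖a * b - b * a‖ ≤ 2 :=
  calc ‖a * b - b * a‖ ≤ ‖a‖ * ‖b‖ + ‖b‖ * ‖a‖ :=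
        (norm_sub_le _ _).trans (add_le_add (norm_mul_le _ _) (norm_mul_le _ _))
    _ ≤ 1 * 1 + 1 * 1 := by gcongr
    _ = 2 := by norm_num

section CStarRing

variable {E : Type*} [NormedRing E] [StarRing E] [CStarRing E]

theorem CStarRing.norm_one_le : ‖(1 : E)‖ ≤ 1 := by
  nontriviality E
  exact CStarRing.norm_one.le

theorem IsSelfAdjoint.norm_le_one_of_mul_self_eq_one {a : E} (ha : IsSelfAdjoint a)
    (h : a * a = 1) : ‖a‖ ≤ 1 := by
  have : ‖a‖ * ‖a‖ ≤ 1 := by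
    rw [← CStarRing.norm_star_mul_self, ha.star_eq, h]
    exact CStarRing.norm_one_le
  nlinarith [norm_nonneg a]

theorem norm_chshOperator_sq_le {a₁ a₂ b₁ b₂ : E}
    (ha₁ : IsSelfAdjoint a₁) (ha₂ : IsSelfAdjoint a₂)
    (hb₁ : IsSelfAdjoint b₁) (hb₂ : IsSelfAdjoint b₂)
    (ha₁sq : a₁ * a₁ = 1) (ha₂sq : a₂ * a₂ = 1) (hb₁sq : b₁ * b₁ = 1) (hb₂sq : b₂ * b₂ = 1)
    (h₁₁ : Commute a₁ b₁) (h₁₂ : Commute a₁ b₂) (h₂₁ : Commute a₂ b₁) (h₂₂ : Commute a₂ b₂) :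
    ‖chshOperator a₁ a₂ b₁ b₂‖ ^ 2 ≤ 4 + ‖a₁ * a₂ - a₂ * a₁‖ * ‖b₁ * b₂ - b₂ * b₁‖ := by
  have hI := ha₁.chshOperator ha₂ hb₁ hb₂ h₁₁ h₁₂ h₂₁ h₂₂
  have h4 : ‖(4 : E)‖ ≤ 4 := by
    simpa using (Nat.norm_cast_le (α := E) 4).trans
      (mul_le_of_le_one_right (by norm_num) CStarRing.norm_one_le)
  calc ‖chshOperator a₁ a₂ b₁ b₂‖ ^ 2
      = ‖chshOperator a₁ a₂ b₁ b₂ * chshOperator a₁ a₂ b₁ b₂‖ := by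
        rw [sq, ← CStarRing.norm_star_mul_self, hI.star_eq]
    _ = ‖4 - (a₁ * a₂ - a₂ * a₁) * (b₁ * b₂ - b₂ * b₁)‖ := by
        rw [chshOperator_mul_self ha₁sq ha₂sq hb₁sq hb₂sq h₁₁ h₁₂ h₂₁ h₂₂]
    _ ≤ ‖(4 : E)‖ + ‖a₁ * a₂ - a₂ * a₁‖ * ‖b₁ * b₂ - b₂ * b₁‖ :=
        (norm_sub_le _ _).trans (add_le_add_right (norm_mul_le _ _) _)
    _ ≤ 4 + ‖a₁ * a₂ - a₂ * a₁‖ * ‖b₁ * b₂ - b₂ * b₁‖ := by gcongr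

end CStarRing

open scoped Matrix.Norms.L2Operator

theorem matOpNorm_eq_norm {n : Type*} [Fintype n] [DecidableEq n] (M : Matrix n n ℂ) :
    matOpNorm M = ‖M‖ :=
  rfl

namespace Matrix

variable {R m n : Type*} [Fintype m] [DecidableEq m] [Fintype n] [DecidableEq n] [CommSemiring R]

theorem kronecker_one_mul_one_kronecker (A : Matrix m m R) (B : Matrix n n R) :
    A ⊗ₖ (1 : Matrix n n R) * (1 : Matrix m m R) ⊗ₖ B = A ⊗ₖ B := by
  rw [← mul_kronecker_mul, mul_one, one_mul]

theorem commute_kronecker_one_one_kronecker (A : Matrix m m R) (B : Matrix n n R) :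
    Commute (A ⊗ₖ (1 : Matrix n n R)) ((1 : Matrix m m R) ⊗ₖ B) := by
  rw [Commute, SemiconjBy, kronecker_one_mul_one_kronecker, ← mul_kronecker_mul, mul_one, one_mul]

variable [StarRing R]

def kroneckerOneStarAlgHom : Matrix m m R →⋆ₐ[R] Matrix (m × n) (m × n) R where
  toFun A := A ⊗ₖ 1
  map_one' := one_kronecker_one
  map_mul' A B := by rw [← mul_kronecker_mul, one_mul]
  map_zero' := zero_kronecker _
  map_add' A B := add_kronecker A B 1
  commutes' r := by
    simp only [Algebra.algebraMap_eq_smul_one, smul_kronecker, one_kronecker_one]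
  map_star' A := by simp [star_eq_conjTranspose, conjTranspose_kronecker]

def oneKroneckerStarAlgHom : Matrix n n R →⋆ₐ[R] Matrix (m × n) (m × n) R where
  toFun B := 1 ⊗ₖ B
  map_one' := one_kronecker_one
  map_mul' A B := by rw [← mul_kronecker_mul, one_mul]
  map_zero' := kronecker_zero _
  map_add' A B := kronecker_add 1 A B
  commutes' r := by
    simp only [Algebra.algebraMap_eq_smul_one, kronecker_smul, one_kronecker_one]
  map_star' A := by simp [star_eq_conjTranspose, conjTranspose_kronecker]

theorem kroneckerOneStarAlgHom_apply (A : Matrix m m R) :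
    kroneckerOneStarAlgHom (n := n) A = A ⊗ₖ 1 := rfl

theorem oneKroneckerStarAlgHom_apply (B : Matrix n n R) :
    oneKroneckerStarAlgHom (m := m) B = 1 ⊗ₖ B := rfl

theorem l2_opNorm_chsh_kronecker_sq_le {A₁ A₂ : Matrix m m ℂ} {B₁ B₂ : Matrix n n ℂ}
    (hA₁ : A₁.IsHermitian) (hA₂ : A₂.IsHermitian) (hB₁ : B₁.IsHermitian) (hB₂ : B₂.IsHermitian)
    (hA₁sq : A₁ * A₁ = 1) (hA₂sq : A₂ * A₂ = 1) (hB₁sq : B₁ * B₁ = 1) (hB₂sq : B₂ * B₂ = 1) :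
    ‖A₁ ⊗ₖ B₁ + A₁ ⊗ₖ B₂ + A₂ ⊗ₖ B₁ - A₂ ⊗ₖ B₂‖ ^ 2
      ≤ 4 + ‖A₁ * A₂ - A₂ * A₁‖ * ‖B₁ * B₂ - B₂ * B₁‖ := by
  let φ := kroneckerOneStarAlgHom (R := ℂ) (m := m) (n := n)
  let ψ := oneKroneckerStarAlgHom (R := ℂ) (m := m) (n := n)
  have hcomm (A : Matrix m m ℂ) (B : Matrix n n ℂ) : Commute (φ A) (ψ B) :=
    commute_kronecker_one_one_kronecker A B
  have hI : A₁ ⊗ₖ B₁ + A₁ ⊗ₖ B₂ + A₂ ⊗ₖ B₁ - A₂ ⊗ₖ B₂ =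
      chshOperator (φ A₁) (φ A₂) (ψ B₁) (ψ B₂) := by
    simp only [chshOperator, φ, ψ, kroneckerOneStarAlgHom_apply, oneKroneckerStarAlgHom_apply,
      kronecker_one_mul_one_kronecker]
  have h := norm_chshOperator_sq_le (hA₁.isSelfAdjoint.map φ) (hA₂.isSelfAdjoint.map φ)
    (hB₁.isSelfAdjoint.map ψ) (hB₂.isSelfAdjoint.map ψ)
    (by rw [← map_mul, hA₁sq, map_one]) (by rw [← map_mul, hA₂sq, map_one])
    (by rw [← map_mul, hB₁sq, map_one]) (by rw [← map_mul, hB₂sq, map_one])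
    (hcomm _ _) (hcomm _ _) (hcomm _ _) (hcomm _ _)
  simp only [← map_mul, ← map_sub] at h
  rw [hI]
  refine h.trans ?_
  gcongr
  exacts [NonUnitalStarAlgHom.norm_apply_le φ _, NonUnitalStarAlgHom.norm_apply_le ψ _]

end Matrix

/-- Tsirelson-type bound: `‖I‖² ≤ 4 + ‖[A₁,A₂]‖·‖[B₁,B₂]‖`, and in particular
`‖I‖ ≤ 2√2`, for the CHSH operator built from Hermitian involutions. -/
theorem chsh_norm_bound
    (m n : ℕ)
    (A₁ A₂ : Matrix (Fin m) (Fin m) ℂ) (B₁ B₂ : Matrix (Fin n) (Fin n) ℂ)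
    (hA₁ : A₁.IsHermitian) (hA₂ : A₂.IsHermitian)
    (hB₁ : B₁.IsHermitian) (hB₂ : B₂.IsHermitian)
    (hA₁sq : A₁ * A₁ = 1) (hA₂sq : A₂ * A₂ = 1)
    (hB₁sq : B₁ * B₁ = 1) (hB₂sq : B₂ * B₂ = 1)
    (I : Matrix (Fin m × Fin n) (Fin m × Fin n) ℂ)
    (hI : I = A₁ ⊗ₖ B₁ + A₁ ⊗ₖ B₂ + A₂ ⊗ₖ B₁ - A₂ ⊗ₖ B₂) :
    matOpNorm I ^ 2 ≤ 4 + matOpNorm (A₁ * A₂ - A₂ * A₁) * matOpNorm (B₁ * B₂ - B₂ * B₁)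
      ∧ matOpNorm I ≤ 2 * Real.sqrt 2 := by
  simp only [matOpNorm_eq_norm]
  have hbound : ‖I‖ ^ 2 ≤ 4 + ‖A₁ * A₂ - A₂ * A₁‖ * ‖B₁ * B₂ - B₂ * B₁‖ :=
    hI ▸ Matrix.l2_opNorm_chsh_kronecker_sq_le hA₁ hA₂ hB₁ hB₂ hA₁sq hA₂sq hB₁sq hB₂sq
  have hA : ‖A₁ * A₂ - A₂ * A₁‖ ≤ 2 := norm_mul_sub_mul_le_two
    (hA₁.isSelfAdjoint.norm_le_one_of_mul_self_eq_one hA₁sq)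
    (hA₂.isSelfAdjoint.norm_le_one_of_mul_self_eq_one hA₂sq)
  have hB : ‖B₁ * B₂ - B₂ * B₁‖ ≤ 2 := norm_mul_sub_mul_le_two
    (hB₁.isSelfAdjoint.norm_le_one_of_mul_self_eq_one hB₁sq)
    (hB₂.isSelfAdjoint.norm_le_one_of_mul_self_eq_one hB₂sq)
  have h8 : ‖I‖ ^ 2 ≤ 8 := by nlinarith [norm_nonneg (A₁ * A₂ - A₂ * A₁)]
  refine ⟨hbound, ?_⟩
  nlinarith [norm_nonneg I, Real.sqrt_nonneg 2, Real.sq_sqrt (show (0 : ℝ) ≤ 2 by norm_num)]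
end

section
/- Let μ₁ > μ₂ ≥ ... ≥ μ_d be real, L + v a real number with (1/d)∑μᵢ < L+v ≤ μ₁. Among all probability vectors λ (decreasingly ordered) with ∑ᵢ μᵢλᵢ = L+v, the minimum of λ₁ is attained by a vector of the form λ₁ = λ₂ = ... = λ_{r−1} ≥ λ_r > 0, λᵢ = 0 for i > r, where r is the unique integer with 1/r ≤ λ₁ < 1/(r−1). -/
/-!
Write `c = L + v`. The candidate minimiser is the staircase `(t, …, t, 1 - k t, 0, …, 0)` with `k`
entries equal to `t` and `1/(k+1) ≤ t < 1/k`: `k + 1` is the first length at which the running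
average of `μ` drops to `c`, and `t` then solves the linear equation `⟨μ, λ⟩ = c`. If a feasible
`g` had `g₀ < t`, then `g` would lie strictly below the staircase on its flat part and above it
after the step, so it would move mass of the same total towards smaller `μ`, forcing
`⟨μ, g⟩ < c`; `μ₁ < μ₀` makes this strict.
-/

open Finset

theorem Antitone.sum_mul_lt_sum_mul_of_single_crossing {ι : Type*} [Fintype ι] [LinearOrder ι]
    {μ f g : ι → ℝ} {m a : ι} (hμ : Antitone μ) (hμa : μ m < μ a)
    (hlt : ∀ i < m, g i < f i) (hgt : ∀ i, m < i → f i ≤ g i)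
    (hsum : ∑ i, g i = ∑ i, f i) :
    ∑ i, μ i * g i < ∑ i, μ i * f i := by
  have hcentre : ∑ i, μ i * g i - ∑ i, μ i * f i = ∑ i, (μ i - μ m) * (g i - f i) := by
    simp only [sub_mul, mul_sub, sum_sub_distrib, ← mul_sum, hsum]
    ring
  have hterm : ∀ i, (μ i - μ m) * (g i - f i) ≤ 0 := by
    intro i
    rcases lt_trichotomy i m with h | rfl | h
    · exact mul_nonpos_of_nonneg_of_nonpos (sub_nonneg.2 (hμ h.le)) (sub_neg.2 (hlt i h)).le
    · simp
    · exact mul_nonpos_of_nonpos_of_nonneg (sub_nonpos.2 (hμ h.le)) (sub_nonneg.2 (hgt i h))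
  have ham : a < m := lt_of_not_ge fun h => (hμ h).not_gt hμa
  have hneg : (μ a - μ m) * (g a - f a) < 0 :=
    mul_neg_of_pos_of_neg (sub_pos.2 hμa) (sub_neg.2 (hlt a ham))
  have : ∑ i, (μ i - μ m) * (g i - f i) < 0 := by
    simpa using sum_lt_sum (fun i _ => hterm i) ⟨a, mem_univ a, hneg⟩
  linarith

theorem Fin.sum_filter_val_lt_succ {M : Type*} [AddCommMonoid M] {d j : ℕ} (hj : j < d)
    (f : Fin d → M) :
    ∑ i : Fin d with i.val < j + 1, f i = ∑ i : Fin d with i.val < j, f i + f ⟨j, hj⟩ := by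
  have h : ({i : Fin d | i.val < j + 1} : Finset (Fin d))
      = insert ⟨j, hj⟩ ({i : Fin d | i.val < j} : Finset (Fin d)) := by
    ext i
    simp only [Order.lt_add_one_iff, mem_filter, mem_univ, true_and, mem_insert, Fin.ext_iff]
    omega
  rw [h, sum_insert (by simp), add_comm]

theorem exists_level_of_mul_lt_of_add_le {κ S m c : ℝ} (hκ : 1 ≤ κ) (hS : κ * c < S)
    (hSm : S + m ≤ (κ + 1) * c) :
    ∃ t, κ * t < 1 ∧ 1 ≤ (κ + 1) * t ∧ t ≤ 1 ∧ t * S + (1 - κ * t) * m = c := by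
  have hD : κ * (c - m) < S - κ * m := by linarith
  have hD0 : 0 < S - κ * m := by nlinarith
  refine ⟨(c - m) / (S - κ * m), ?_, ?_, ?_, ?_⟩
  · rw [← mul_div_assoc, div_lt_one hD0]; exact hD
  · rw [← mul_div_assoc, le_div_iff₀ hD0]; linarith
  · rw [div_le_one hD0]; nlinarith
  · linear_combination div_mul_cancel₀ (c - m) hD0.ne'

def staircase {d : ℕ} (k : ℕ) (t : ℝ) (i : Fin d) : ℝ :=
  if (i : ℕ) < k then t else if (i : ℕ) = k then 1 - k * t else 0

section staircase

variable {d k : ℕ} {t : ℝ}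

theorem staircase_of_lt {i : Fin d} (h : (i : ℕ) < k) : staircase k t i = t := if_pos h

theorem staircase_of_eq {i : Fin d} (h : (i : ℕ) = k) : staircase k t i = 1 - k * t := by
  simp [staircase, h]

theorem staircase_of_gt {i : Fin d} (h : k < (i : ℕ)) : staircase k t i = 0 := by
  simp [staircase, h.ne', h.not_gt]

-- for `k = 0` the entry is `1 - 0 * t`, and the hypotheses force `t = 1`
theorem staircase_apply_zero (hd : 0 < d) (hk : 1 ≤ (k + 1) * t) (ht : t ≤ 1) :
    staircase k t ⟨0, hd⟩ = t := by
  rcases k.eq_zero_or_pos with rfl | hk0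
  · rw [staircase_of_eq (k := 0) rfl]
    simp only [Nat.cast_zero, zero_add, one_mul, zero_mul, sub_zero] at hk ⊢
    linarith
  · exact staircase_of_lt hk0

theorem antitone_staircase (hk : k * t ≤ 1) (hk' : 1 ≤ (k + 1) * t) :
    Antitone (staircase (d := d) k t) := by
  intro i j hij
  have hij' : (i : ℕ) ≤ j := hij
  have ht : 0 ≤ t := by nlinarith
  unfold staircase
  split_ifs <;> first | omega | linarith

theorem staircase_nonneg (hk : k * t ≤ 1) (hk' : 1 ≤ (k + 1) * t) (i : Fin d) :
    0 ≤ staircase k t i := by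
  have ht : 0 ≤ t := by nlinarith
  unfold staircase
  split_ifs <;> linarith

theorem sum_mul_staircase (hkd : k < d) (f : Fin d → ℝ) :
    ∑ i, f i * staircase k t i
      = t * ∑ i : Fin d with i.val < k, f i + (1 - k * t) * f ⟨k, hkd⟩ := by
  have h : ∀ i : Fin d, f i * staircase k t i
      = t * (if (i : ℕ) < k then f i else 0) + (1 - k * t) * (if i = ⟨k, hkd⟩ then f i else 0) := by
    intro i
    simp only [staircase, Fin.ext_iff]
    split_ifs <;> first | omega | ring
  simp only [h, sum_add_distrib, ← mul_sum, sum_filter, sum_ite_eq', mem_univ, if_true]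

theorem sum_staircase (hkd : k < d) : ∑ i : Fin d, staircase k t i = 1 := by
  have h := sum_mul_staircase (t := t) hkd 1
  simp only [Pi.one_apply, one_mul, sum_const, Fin.card_filter_val_lt, min_eq_right hkd.le,
    nsmul_eq_mul, mul_one] at h
  linarith

theorem staircase_apply_zero_le (hd : 1 < d) {μ : Fin d → ℝ} (hμ : Antitone μ)
    (hμ01 : μ ⟨1, hd⟩ < μ ⟨0, by omega⟩) (hkd : k < d) (hk : 1 ≤ (k + 1) * t) (ht : t ≤ 1)
    {g : Fin d → ℝ} (hg : Antitone g) (hg0 : ∀ i, 0 ≤ g i) (hg1 : ∑ i, g i = 1)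
    (hpair : ∑ i, μ i * g i = ∑ i, μ i * staircase k t i) :
    t ≤ g ⟨0, by omega⟩ := by
  by_contra! hlt
  have h0 : staircase k t (⟨0, by omega⟩ : Fin d) = t := staircase_apply_zero _ hk ht
  -- for `k = 0` the pivot `1` still separates the entries equal to `t` from the vanishing ones
  let m : Fin d := ⟨max k 1, max_lt hkd hd⟩
  refine (hμ.sum_mul_lt_sum_mul_of_single_crossing (m := m) (a := ⟨0, by omega⟩)
    ?_ ?_ ?_ ?_).ne hpair
  · exact (hμ (show (⟨1, hd⟩ : Fin d) ≤ m from Fin.mk_le_mk.2 (le_max_right k 1))).trans_lt hμ01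
  · intro i hi
    have hi' : (i : ℕ) < k ∨ (i : ℕ) = 0 := by
      have : (i : ℕ) < max k 1 := hi
      omega
    have hti : staircase k t i = t := by
      rcases hi' with hik | hi0
      · exact staircase_of_lt hik
      · rw [← h0]; congr 1; exact Fin.ext hi0
    exact (hg (Nat.zero_le i)).trans_lt (hti ▸ hlt)
  · intro i hi
    rw [staircase_of_gt (lt_of_le_of_lt (le_max_left k 1) hi)]
    exact hg0 i
  · rw [hg1, sum_staircase hkd]

theorem exists_staircase_sum_mul_eq {μ : Fin d → ℝ} {c : ℝ} (hd : 0 < d)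
    (hlow : ∑ i, μ i < d * c) (hhigh : c ≤ μ ⟨0, hd⟩) :
    ∃ k < d, ∃ t : ℝ, k * t < 1 ∧ 1 ≤ (k + 1) * t ∧ t ≤ 1 ∧ ∑ i, μ i * staircase k t i = c := by
  have hlast : ∑ i : Fin d with i.val < d - 1 + 1, μ i ≤ ((d - 1 : ℕ) + 1 : ℝ) * c := by
    rw [Nat.sub_add_cancel hd, Nat.cast_sub hd]
    simpa using hlow.le
  have hex : ∃ j : ℕ, ∑ i : Fin d with i.val < j + 1, μ i ≤ ((j : ℝ) + 1) * c := ⟨d - 1, hlast⟩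
  classical
  obtain ⟨k, hk, hmin⟩ : ∃ k : ℕ, ∑ i : Fin d with i.val < k + 1, μ i ≤ ((k : ℝ) + 1) * c ∧
      ∀ j < k, ¬ ∑ i : Fin d with i.val < j + 1, μ i ≤ ((j : ℝ) + 1) * c :=
    ⟨Nat.find hex, Nat.find_spec hex, fun _ => Nat.find_min hex⟩
  have hkd : k < d := by
    by_contra! h
    exact hmin (d - 1) (by omega) hlast
  refine ⟨k, hkd, ?_⟩
  simp only [sum_mul_staircase hkd]
  rw [Fin.sum_filter_val_lt_succ hkd] at hk
  rcases k.eq_zero_or_pos with rfl | hk0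
  · refine ⟨1, by simp, by simp, le_rfl, ?_⟩
    simp only [not_lt_zero, filter_false, sum_empty, zero_add, Nat.cast_zero, one_mul, mul_zero,
      mul_one, sub_zero] at hk ⊢
    linarith
  · have hprev := hmin (k - 1) (by omega)
    rw [Nat.sub_add_cancel hk0, Nat.cast_sub hk0] at hprev
    push_cast at hprev
    exact exists_level_of_mul_lt_of_add_le (by exact_mod_cast hk0) (by linarith) hk

end staircase

/-- Lemma 1: among decreasingly ordered probability vectors `λ` with
`∑ μᵢ λᵢ = L + v` (for `μ` decreasing with `μ₁ > μ₂` and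
`(1/d)∑μᵢ < L+v ≤ μ₁`), the minimum of `λ₁` is attained by a vector with
`λ₁ = ⋯ = λ_{r-1} ≥ λ_r > 0`, `λᵢ = 0` for `i > r`, where `r` satisfies
`1/r ≤ λ₁ < 1/(r-1)`. -/
theorem min_largest_eigenvalue_fixed_bell_value
    (d : ℕ) (hd : 2 ≤ d) (μ : Fin d → ℝ) (hμ : Antitone μ)
    (hμ12 : μ ⟨1, by omega⟩ < μ ⟨0, by omega⟩)
    (L v : ℝ)
    (hlow : (1 / (d : ℝ)) * ∑ i, μ i < L + v)
    (hhigh : L + v ≤ μ ⟨0, by omega⟩) :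
    ∃ (lam : Fin d → ℝ) (r : ℕ),
      (Antitone lam ∧ (∀ i, 0 ≤ lam i) ∧ (∑ i, lam i = 1) ∧
        (∑ i, μ i * lam i = L + v)) ∧
      (∀ lam' : Fin d → ℝ, Antitone lam' → (∀ i, 0 ≤ lam' i) →
        (∑ i, lam' i = 1) → (∑ i, μ i * lam' i = L + v) →
        lam ⟨0, by omega⟩ ≤ lam' ⟨0, by omega⟩) ∧
      1 ≤ r ∧ r ≤ d ∧
      (∀ i : Fin d, (i : ℕ) < r - 1 → lam i = lam ⟨0, by omega⟩) ∧
      (∀ i : Fin d, (i : ℕ) = r - 1 → 0 < lam i ∧ lam i ≤ lam ⟨0, by omega⟩) ∧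
      (∀ i : Fin d, r ≤ (i : ℕ) → lam i = 0) ∧
      1 / (r : ℝ) ≤ lam ⟨0, by omega⟩ ∧
      (1 < r → lam ⟨0, by omega⟩ < 1 / ((r : ℝ) - 1)) := by
  have hsum_lt : ∑ i, μ i < d * (L + v) := by
    rwa [one_div, inv_mul_lt_iff₀ (by positivity)] at hlow
  obtain ⟨k, hkd, t, hkt, hkt', ht, hpair⟩ := exists_staircase_sum_mul_eq (by omega) hsum_lt hhigh
  have h0 : staircase k t (⟨0, by omega⟩ : Fin d) = t := staircase_apply_zero _ hkt' ht
  have hanti : Antitone (staircase (d := d) k t) := antitone_staircase hkt.le hkt'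
  refine ⟨staircase k t, k + 1, ⟨hanti, staircase_nonneg hkt.le hkt', sum_staircase hkd, hpair⟩,
    fun g hg hg0 hg1 hg_pair => h0.trans_le <| staircase_apply_zero_le (by omega) hμ hμ12 hkd
      hkt' ht hg hg0 hg1 (hg_pair.trans hpair.symm), by omega, by omega, ?_, ?_, ?_, ?_, ?_⟩
  · intro i hi
    rw [h0, staircase_of_lt (by omega)]
  · intro i hi
    have hik : staircase k t i = 1 - k * t := staircase_of_eq (by omega)
    exact ⟨by linarith, hanti (Nat.zero_le _)⟩
  · intro i hi
    exact staircase_of_gt (by omega)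
  · rw [h0, Nat.cast_succ, div_le_iff₀ (by positivity)]
    linarith
  · intro hk
    have hk0 : (0 : ℝ) < k := by exact_mod_cast (by omega : 0 < k)
    rw [h0, Nat.cast_succ, add_sub_cancel_right, lt_div_iff₀ hk0]
    linarith
end

section
/- Let P be a strictly convex real-valued function on d×d density matrices with P(ρ) = Tr(ρ²), and let I be Hermitian. If ρ* minimizes P subject to Tr(ρI) = w for some w > Tr(I)/d, then ρ* achieves the maximal expectation value among all states of purity P(ρ*); i.e., there is no state σ with Tr(σ²) = Tr(ρ*²) and Tr(σI) > w. -/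
/-!
Suppose a state `σ` had the purity of `ρ` but `Tr(σ I) > w`. Along the segment from `σ` to the
maximally mixed state `1/d` the expectation of `I` moves affinely down to `Tr(I)/d < w`, so some
`τ = t σ + (1 - t)/d` with `0 < t < 1` has `Tr(τ I) = w`. Its purity is
`Tr τ² = t² Tr σ² + (1 - t²)/d`, which is strictly below `Tr σ²` because every state other than
`1/d` has `Tr σ² > 1/d`. Thus `τ` beats the minimizer `ρ`.
-/

open ComplexOrder

def IsDensityMatrix {d : ℕ} (ρ : Matrix (Fin d) (Fin d) ℂ) : Prop :=
  ρ.PosSemidef ∧ ρ.trace = 1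

open Matrix

namespace Matrix.IsHermitian

variable {n : Type*} [Fintype n] {A B : Matrix n n ℂ}

theorem ofReal_re_trace (hA : A.IsHermitian) : (A.trace.re : ℂ) = A.trace :=
  Complex.conj_eq_iff_re.mp <| by rw [starRingEnd_apply, ← trace_conjTranspose, hA.eq]

theorem ofReal_re_trace_mul (hA : A.IsHermitian) (hB : B.IsHermitian) :
    ((A * B).trace.re : ℂ) = (A * B).trace :=
  Complex.conj_eq_iff_re.mp <| by
    rw [starRingEnd_apply, ← trace_conjTranspose, conjTranspose_mul, hA.eq, hB.eq, trace_mul_comm]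

end Matrix.IsHermitian

theorem ne_zero_of_trace_eq_one {d : ℕ} {A : Matrix (Fin d) (Fin d) ℂ} (hA : A.trace = 1) :
    d ≠ 0 := by
  rintro rfl
  simp at hA

noncomputable def maximallyMixed (d : ℕ) : Matrix (Fin d) (Fin d) ℂ := (d : ℝ)⁻¹ • 1

theorem trace_maximallyMixed_mul {d : ℕ} (A : Matrix (Fin d) (Fin d) ℂ) :
    (maximallyMixed d * A).trace = A.trace / d := by
  simp [maximallyMixed, Complex.real_smul, div_eq_inv_mul]

theorem trace_smul_add_smul_maximallyMixed_mul {d : ℕ} (t : ℝ) (σ A : Matrix (Fin d) (Fin d) ℂ) :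
    ((t • σ + (1 - t) • maximallyMixed d) * A).trace
      = t * (σ * A).trace + (1 - t) * A.trace / d := by
  simp [add_mul, trace_maximallyMixed_mul, Complex.real_smul, mul_div_assoc]

theorem isDensityMatrix_maximallyMixed {d : ℕ} (hd : d ≠ 0) :
    IsDensityMatrix (maximallyMixed d) := by
  refine ⟨PosSemidef.one.smul (by positivity), ?_⟩
  simpa [hd] using trace_maximallyMixed_mul (d := d) 1

theorem convex_isDensityMatrix (d : ℕ) :
    Convex ℝ {σ : Matrix (Fin d) (Fin d) ℂ | IsDensityMatrix σ} := by
  rintro σ ⟨hσ, hσ1⟩ τ ⟨hτ, hτ1⟩ a b ha hb hab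
  refine ⟨(hσ.smul ha).add (hτ.smul hb), ?_⟩
  simp [hσ1, hτ1, Complex.real_smul, ← Complex.ofReal_add, hab]

theorem trace_mul_self_smul_add_smul_maximallyMixed {d : ℕ} {σ : Matrix (Fin d) (Fin d) ℂ}
    (hσ : σ.trace = 1) (t : ℝ) :
    ((t • σ + (1 - t) • maximallyMixed d) * (t • σ + (1 - t) • maximallyMixed d)).trace
      = t ^ 2 * (σ * σ).trace + (1 - t ^ 2) / d := by
  have hd : (d : ℂ) ≠ 0 := by exact_mod_cast ne_zero_of_trace_eq_one hσ
  have htrace : (t • σ + (1 - t) • maximallyMixed d).trace = 1 := by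
    simpa [hσ, hd] using trace_smul_add_smul_maximallyMixed_mul t σ 1
  rw [trace_smul_add_smul_maximallyMixed_mul, trace_mul_comm,
    trace_smul_add_smul_maximallyMixed_mul, hσ, htrace]
  field_simp
  ring

namespace IsDensityMatrix

variable {d : ℕ} {σ : Matrix (Fin d) (Fin d) ℂ}

theorem inv_card_lt_re_trace_mul_self (hσ : IsDensityMatrix σ) (hne : σ ≠ maximallyMixed d) :
    (d : ℝ)⁻¹ < (σ * σ).trace.re := by
  have hd : d ≠ 0 := ne_zero_of_trace_eq_one hσ.2
  set D := σ - maximallyMixed d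
  have hD : Dᴴ = D := by
    simp [D, maximallyMixed, hσ.1.1.eq]
  have hsplit : (σ * σ).trace = (d : ℂ)⁻¹ + (Dᴴ * D).trace := by
    simp only [hD, D, sub_mul, mul_sub, trace_sub, trace_maximallyMixed_mul, hσ.2]
    rw [trace_mul_comm σ (maximallyMixed d), trace_maximallyMixed_mul, hσ.2,
      (isDensityMatrix_maximallyMixed hd).2]
    field_simp
    ring
  have hpos : 0 < (Dᴴ * D).trace :=
    (posSemidef_conjTranspose_mul_self D).trace_nonneg.lt_of_ne'
      (trace_conjTranspose_mul_self_eq_zero_iff.not.mpr (sub_ne_zero.mpr hne))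
  rw [hsplit, Complex.add_re, ← Complex.ofReal_natCast, ← Complex.ofReal_inv, Complex.ofReal_re]
  exact lt_add_of_pos_right _ (by simpa using (Complex.lt_def.mp hpos).1)

theorem re_trace_mul_self_smul_add_smul_maximallyMixed_lt (hσ : IsDensityMatrix σ)
    (hne : σ ≠ maximallyMixed d) {t : ℝ} (ht : |t| < 1) :
    ((t • σ + (1 - t) • maximallyMixed d) * (t • σ + (1 - t) • maximallyMixed d)).trace.re
      < (σ * σ).trace.re := by
  have hpurity := hσ.inv_card_lt_re_trace_mul_self hne
  have ht2 : t ^ 2 < 1 := (sq_lt_one_iff_abs_lt_one t).mpr ht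
  rw [trace_mul_self_smul_add_smul_maximallyMixed hσ.2, ← Complex.ofReal_pow, ← Complex.ofReal_one,
    ← Complex.ofReal_sub, ← Complex.ofReal_natCast, ← Complex.ofReal_div, Complex.add_re,
    Complex.re_ofReal_mul, Complex.ofReal_re]
  calc t ^ 2 * (σ * σ).trace.re + (1 - t ^ 2) / d
      = (σ * σ).trace.re - (1 - t ^ 2) * ((σ * σ).trace.re - (d : ℝ)⁻¹) := by ring
    _ < (σ * σ).trace.re := sub_lt_self _ (mul_pos (sub_pos.2 ht2) (sub_pos.2 hpurity))

end IsDensityMatrix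

theorem min_purity_is_max_expectation_general
    (d : ℕ)
    (I : Matrix (Fin d) (Fin d) ℂ) (hI : I.IsHermitian)
    (ρ : Matrix (Fin d) (Fin d) ℂ)
    (w : ℝ)
    (hwgt : (I.trace).re / d < w)
    (hmin : ∀ σ : Matrix (Fin d) (Fin d) ℂ, IsDensityMatrix σ →
      (σ * I).trace = (w : ℂ) → ((ρ * ρ).trace).re ≤ ((σ * σ).trace).re) :
    ¬ ∃ σ : Matrix (Fin d) (Fin d) ℂ, IsDensityMatrix σ ∧
      (σ * σ).trace = (ρ * ρ).trace ∧ w < ((σ * I).trace).re := by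
  rintro ⟨σ, hσ, hpurity, hgt⟩
  have hne : σ ≠ maximallyMixed d := by
    rintro rfl
    rw [trace_maximallyMixed_mul, Complex.div_natCast_re] at hgt
    linarith
  set m := I.trace.re / d with hm
  set t := (w - m) / ((σ * I).trace.re - m)
  have ht0 : 0 < t := div_pos (by linarith) (by linarith)
  have ht1 : t < 1 := (div_lt_one (by linarith)).mpr (by linarith)
  have htw : t * ((σ * I).trace.re - m) = w - m := div_mul_cancel₀ _ (by linarith)
  have hτ : IsDensityMatrix (t • σ + (1 - t) • maximallyMixed d) :=
    convex_isDensityMatrix d hσ (isDensityMatrix_maximallyMixed (ne_zero_of_trace_eq_one hσ.2))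
      ht0.le (by linarith) (by ring)
  have hτI : ((t • σ + (1 - t) • maximallyMixed d) * I).trace = w := by
    rw [trace_smul_add_smul_maximallyMixed_mul, ← hσ.1.1.ofReal_re_trace_mul hI,
      ← hI.ofReal_re_trace]
    exact_mod_cast (by linear_combination htw + (t - 1) * hm :
      t * (σ * I).trace.re + (1 - t) * I.trace.re / d = w)
  refine (hmin _ hτ hτI).not_gt ?_
  rw [← hpurity]
  exact hσ.re_trace_mul_self_smul_add_smul_maximallyMixed_lt hne (abs_lt.mpr ⟨by linarith, ht1⟩)

/-- If `ρ*` minimizes the linear purity `Tr(ρ²)` among density matrices with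
`Tr(ρ I) = w` for `w > Tr(I)/d`, then no state of the same purity achieves a
strictly larger expectation value of `I`. -/
theorem min_purity_is_max_expectation
    (d : ℕ) (hd : 0 < d)
    (I : Matrix (Fin d) (Fin d) ℂ) (hI : I.IsHermitian)
    (ρ : Matrix (Fin d) (Fin d) ℂ) (hρ : IsDensityMatrix ρ)
    (w : ℝ) (hw : (ρ * I).trace = (w : ℂ))
    (hwgt : (I.trace).re / d < w)
    (hmin : ∀ σ : Matrix (Fin d) (Fin d) ℂ, IsDensityMatrix σ →
      (σ * I).trace = (w : ℂ) → ((ρ * ρ).trace).re ≤ ((σ * σ).trace).re) :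
    ¬ ∃ σ : Matrix (Fin d) (Fin d) ℂ, IsDensityMatrix σ ∧
      (σ * σ).trace = (ρ * ρ).trace ∧ w < ((σ * I).trace).re :=
  min_purity_is_max_expectation_general d I hI ρ w hwgt hmin
end

section
/- The generalized robustness of purity P_R(ρ) := min{x ≥ 0 : ∃ density matrix τ with (ρ + xτ)/(1+x) = 1/d} of a d-dimensional density matrix ρ equals d·λ₁(ρ) − 1, where λ₁(ρ) is the largest eigenvalue of ρ. -/
open ComplexOrder

/-!
Clearing the denominator, `(ρ + xτ)/(1+x) = 1/d` says `xτ = c • 1 - ρ` with `c = (1+x)/d`.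
The matrix `c • 1 - ρ` automatically has trace `x`, so a density matrix `τ` solving this exists
exactly when `c • 1 - ρ` is positive semidefinite, i.e. when `λ₁(ρ) ≤ c`, i.e. `x ≥ dλ₁(ρ) - 1`.
Since `dλ₁(ρ) ≥ tr ρ = 1`, the constraint `x ≥ 0` is then automatic and the infimum is attained.
-/

open MatrixOrder

namespace Matrix

variable {n 𝕜 : Type*} [Fintype n] [DecidableEq n] [RCLike 𝕜]

theorem IsHermitian.posSemidef_smul_one_sub_iff {A : Matrix n n 𝕜} (hA : A.IsHermitian) (c : ℝ) :
    ((c : 𝕜) • (1 : Matrix n n 𝕜) - A).PosSemidef ↔ ∀ i, hA.eigenvalues i ≤ c := by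
  rw [← le_iff, ← RCLike.real_smul_eq_coe_smul (K := 𝕜), ← Algebra.algebraMap_eq_smul_one,
    le_algebraMap_iff_spectrum_le hA.isSelfAdjoint, hA.spectrum_real_eq_range_eigenvalues,
    Set.forall_mem_range]

theorem IsHermitian.posSemidef_smul_one_sub_iff_iSup_le [Nonempty n] {A : Matrix n n 𝕜}
    (hA : A.IsHermitian) (c : ℝ) :
    ((c : 𝕜) • (1 : Matrix n n 𝕜) - A).PosSemidef ↔ ⨆ i, hA.eigenvalues i ≤ c := by
  rw [hA.posSemidef_smul_one_sub_iff, ciSup_le_iff (Set.finite_range _).bddAbove]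

theorem IsHermitian.re_trace_le_card_mul_iSup_eigenvalues {A : Matrix n n 𝕜}
    (hA : A.IsHermitian) :
    RCLike.re A.trace ≤ Fintype.card n * ⨆ i, hA.eigenvalues i := by
  rw [hA.trace_eq_sum_eigenvalues, map_sum, ← nsmul_eq_mul]
  simp_rw [RCLike.ofReal_re]
  exact Finset.sum_le_card_nsmul _ _ _ fun i _ => le_ciSup (Set.finite_range _).bddAbove i

end Matrix

namespace IsDensityMatrix

variable {d : ℕ} {ρ : Matrix (Fin d) (Fin d) ℂ}

theorem one_le_mul_iSup_eigenvalues (hρ : IsDensityMatrix ρ) (hherm : ρ.IsHermitian) :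
    1 ≤ d * ⨆ i, hherm.eigenvalues i := by
  simpa [hρ.2] using hherm.re_trace_le_card_mul_iSup_eigenvalues

theorem exists_add_smul_eq_smul_one_iff (hρ : IsDensityMatrix ρ) {x c : ℝ} (hx : 0 ≤ x)
    (hc : c * d = 1 + x) :
    (∃ τ, IsDensityMatrix τ ∧ ρ + (x : ℂ) • τ = (c : ℂ) • 1) ↔
      ((c : ℂ) • (1 : Matrix (Fin d) (Fin d) ℂ) - ρ).PosSemidef := by
  constructor
  · rintro ⟨τ, hτ, h⟩
    rw [← h, add_sub_cancel_left]
    exact hτ.1.smul (by exact_mod_cast hx)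
  intro h
  have htrace : ((c : ℂ) • (1 : Matrix (Fin d) (Fin d) ℂ) - ρ).trace = x := by
    rw [Matrix.trace_sub, Matrix.trace_smul, Matrix.trace_one, hρ.2, Fintype.card_fin,
      smul_eq_mul, sub_eq_iff_eq_add']
    exact_mod_cast hc
  rcases hx.eq_or_lt with rfl | hx
  · -- `c • 1 - ρ` is positive semidefinite of trace `0`, hence zero, and any `τ` works
    refine ⟨ρ, hρ, ?_⟩
    rw [Complex.ofReal_zero, h.trace_eq_zero_iff, sub_eq_zero] at htrace
    simp [htrace]
  · have hx' : (x : ℂ) ≠ 0 := by exact_mod_cast hx.ne'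
    refine ⟨(x : ℂ)⁻¹ • ((c : ℂ) • 1 - ρ), ⟨h.smul ?_, ?_⟩, ?_⟩
    · exact inv_nonneg.2 (by exact_mod_cast hx.le)
    · rw [Matrix.trace_smul, htrace, smul_eq_mul, inv_mul_cancel₀ hx']
    · rw [smul_smul, mul_inv_cancel₀ hx', one_smul, add_sub_cancel]

theorem exists_mixture_eq_maximallyMixed_iff (hρ : IsDensityMatrix ρ) (hherm : ρ.IsHermitian)
    (hd : 0 < d) {x : ℝ} (hx : 0 ≤ x) :
    (∃ τ, IsDensityMatrix τ ∧ (1 / (1 + x) : ℂ) • (ρ + (x : ℂ) • τ) = (1 / (d : ℂ)) • 1) ↔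
      d * (⨆ i, hherm.eigenvalues i) - 1 ≤ x := by
  have : Nonempty (Fin d) := ⟨⟨0, hd⟩⟩
  have hd' : (0 : ℝ) < d := by exact_mod_cast hd
  have hx' : (1 + x : ℂ) ≠ 0 := by exact_mod_cast (by linarith : 1 + x ≠ 0)
  have hmix (M : Matrix (Fin d) (Fin d) ℂ) :
      (1 / (1 + x) : ℂ) • M = (1 / (d : ℂ)) • 1 ↔ M = (((1 + x) / d : ℝ) : ℂ) • 1 := by
    rw [one_div, inv_smul_eq_iff₀ hx', smul_smul]
    congr! 2
    push_cast
    ring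
  simp only [hmix]
  rw [hρ.exists_add_smul_eq_smul_one_iff hx (div_mul_cancel₀ _ hd'.ne')]
  refine (hherm.posSemidef_smul_one_sub_iff_iSup_le ((1 + x) / d)).trans ?_
  rw [le_div_iff₀ hd']
  constructor <;> intro <;> linarith

end IsDensityMatrix

/-- The generalized robustness of purity of a density matrix `ρ` equals
`d·λ₁(ρ) - 1`, where `λ₁(ρ)` is the largest eigenvalue of `ρ`. -/
theorem purity_robustness_eq
    (d : ℕ) (hd : 0 < d)
    (ρ : Matrix (Fin d) (Fin d) ℂ) (hρ : IsDensityMatrix ρ)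
    (hherm : ρ.IsHermitian) :
    sInf {x : ℝ | 0 ≤ x ∧ ∃ τ : Matrix (Fin d) (Fin d) ℂ, IsDensityMatrix τ ∧
        ((1 / (1 + x) : ℂ)) • (ρ + (x : ℂ) • τ) =
          ((1 / (d : ℂ))) • (1 : Matrix (Fin d) (Fin d) ℂ)} =
      d * (⨆ i, hherm.eigenvalues i) - 1 := by
  have hnonneg : 0 ≤ d * (⨆ i, hherm.eigenvalues i) - 1 := by
    linarith [hρ.one_le_mul_iSup_eigenvalues hherm]
  refine IsLeast.csInf_eq ⟨⟨hnonneg, ?_⟩, ?_⟩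
  · exact (hρ.exists_mixture_eq_maximallyMixed_iff hherm hd hnonneg).2 le_rfl
  · rintro x ⟨hx, hτ⟩
    exact (hρ.exists_mixture_eq_maximallyMixed_iff hherm hd hx).1 hτ
end

section
/- A Bell-diagonal two-qubit state ρ = ∑ᵢ λᵢ|Ψᵢ⟩⟨Ψᵢ| (with {|Ψᵢ⟩} the Bell basis, λᵢ ≥ 0, ∑λᵢ = 1) with largest eigenvalue λ₁ ≤ 1/2 is separable; specifically, any rank-2 Bell-diagonal state with λ₁ = 1/2 is an equal mixture of two Bell states and hence separable. -/
/-- The computational product basis vector `|ab⟩` of two qubits. -/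
def ket (a b : Fin 2) : Fin 2 × Fin 2 → ℂ :=
  fun p => (if p.1 = a then 1 else 0) * (if p.2 = b then 1 else 0)

/-- The projector `|v⟩⟨v|` as a matrix. -/
def proj (v : Fin 2 × Fin 2 → ℂ) : Matrix (Fin 2 × Fin 2) (Fin 2 × Fin 2) ℂ :=
  Matrix.vecMulVec v (star v)

/-- Separability of a two-qubit state: a convex combination of (normalized)
product states. -/
def Separable (ρ : Matrix (Fin 2 × Fin 2) (Fin 2 × Fin 2) ℂ) : Prop :=
  ∃ (m : ℕ) (p : Fin m → ℝ) (u v : Fin m → (Fin 2 → ℂ)),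
    (∀ i, 0 ≤ p i) ∧ (∑ i, p i = 1) ∧
    (∀ i, ∑ x, ‖u i x‖ ^ 2 = 1) ∧ (∀ i, ∑ x, ‖v i x‖ ^ 2 = 1) ∧
    ρ = ∑ i, (p i : ℂ) •
      Matrix.vecMulVec (fun q => u i q.1 * v i q.2) (star fun q => u i q.1 * v i q.2)

/-- The Bell basis `|Φ⁺⟩, |Φ⁻⟩, |Ψ⁺⟩, |Ψ⁻⟩` of two qubits. -/
noncomputable def bellBasis : Fin 4 → (Fin 2 × Fin 2 → ℂ)
  | 0 => fun p => (ket 0 0 p + ket 1 1 p) / (Real.sqrt 2 : ℂ)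
  | 1 => fun p => (ket 0 0 p - ket 1 1 p) / (Real.sqrt 2 : ℂ)
  | 2 => fun p => (ket 0 1 p + ket 1 0 p) / (Real.sqrt 2 : ℂ)
  | 3 => fun p => (ket 0 1 p - ket 1 0 p) / (Real.sqrt 2 : ℂ)

/-!
In Bell-diagonal coordinates the correlations `tₖ = ⟨σₖ ⊗ σₖ⟩` are signed sums of the `λᵢ`, and
the constraints `0 ≤ λᵢ ≤ 1/2` cut out the octahedron `|t₁| + |t₂| + |t₃| ≤ 1`. Its six vertices are
the equal mixtures of two Bell states, and each of these is an equal mixture of two product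
eigenstates of some `σₖ ⊗ σₖ`, since `(|b⟩ ± ω|b'⟩)/√2` is a product vector for suitable phases
`ω`, e.g. `(|Φ⁺⟩ ± |Ψ⁺⟩)/√2 = |±±⟩`. Separable states form a convex set, which concludes.
-/

open Matrix

def tensorVec (u v : Fin 2 → ℂ) : Fin 2 × Fin 2 → ℂ := fun q => u q.1 * v q.2

lemma separable_proj_tensorVec {u v : Fin 2 → ℂ} (hu : ∑ x, ‖u x‖ ^ 2 = 1)
    (hv : ∑ x, ‖v x‖ ^ 2 = 1) : Separable (proj (tensorVec u v)) :=
  ⟨1, fun _ => 1, fun _ => u, fun _ => v, fun _ => zero_le_one, by simp, fun _ => hu,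
    fun _ => hv, by simp [proj]; rfl⟩

lemma convex_separable : Convex ℝ {ρ | Separable ρ} := by
  rintro ρ ⟨m, p, u, v, hp, hp1, hu, hv, rfl⟩ σ ⟨m', p', u', v', hp', hp1', hu', hv', rfl⟩
    a b ha hb hab
  refine ⟨m + m', Fin.append (a • p) (b • p'), Fin.append u u', Fin.append v v',
    Fin.addCases (by simpa using fun i => mul_nonneg ha (hp i))
      (by simpa using fun i => mul_nonneg hb (hp' i)), ?_,
    Fin.addCases (by simpa using hu) (by simpa using hu'),
    Fin.addCases (by simpa using hv) (by simpa using hv'), ?_⟩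
  · simp [Fin.sum_univ_add, ← Finset.mul_sum, hp1, hp1', hab]
  · simp [Fin.sum_univ_add, Finset.smul_sum, smul_smul, ← Complex.coe_smul]

lemma proj_smul (c : ℂ) (v : Fin 2 × Fin 2 → ℂ) : proj (c • v) = (c * star c) • proj v := by
  simp only [proj, star_smul, vecMulVec_smul, smul_vecMulVec, smul_smul]
  rw [mul_comm]

lemma proj_add_add_proj_sub (a b : Fin 2 × Fin 2 → ℂ) :
    proj (a + b) + proj (a - b) = (2 : ℂ) • (proj a + proj b) := by
  simp only [proj, star_add, star_sub, add_vecMulVec, vecMulVec_add, sub_vecMulVec, vecMulVec_sub]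
  module

lemma proj_add_proj_of_sqrt_two_smul {a b x y : Fin 2 × Fin 2 → ℂ}
    (hx : ((√2 : ℝ) : ℂ) • x = a + b) (hy : ((√2 : ℝ) : ℂ) • y = a - b) :
    proj x + proj y = proj a + proj b := by
  have h2 : ((√2 : ℝ) : ℂ) * star ((√2 : ℝ) : ℂ) = 2 := by
    rw [Complex.star_def, Complex.conj_ofReal, ← Complex.ofReal_mul, Real.mul_self_sqrt] <;>
      norm_num
  have h := proj_add_add_proj_sub a b
  rw [← hx, ← hy, proj_smul, proj_smul, h2, ← smul_add] at h
  exact smul_right_injective _ two_ne_zero h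

lemma proj_smul_of_norm_eq_one {ω : ℂ} (hω : ‖ω‖ = 1) (v : Fin 2 × Fin 2 → ℂ) :
    proj (ω • v) = proj v := by
  rw [proj_smul, Complex.star_def, Complex.mul_conj, Complex.normSq_eq_norm_sq, hω]
  simp

lemma separable_half_proj_add {a b : Fin 2 × Fin 2 → ℂ} (ω : ℂ) (u v u' v' : Fin 2 → ℂ)
    (hω : ‖ω‖ = 1) (hu : ∑ x, ‖u x‖ ^ 2 = 1) (hv : ∑ x, ‖v x‖ ^ 2 = 1)
    (hu' : ∑ x, ‖u' x‖ ^ 2 = 1) (hv' : ∑ x, ‖v' x‖ ^ 2 = 1)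
    (h : ((√2 : ℝ) : ℂ) • tensorVec u v = a + ω • b)
    (h' : ((√2 : ℝ) : ℂ) • tensorVec u' v' = a - ω • b) :
    Separable ((1 / 2 : ℂ) • (proj a + proj b)) := by
  rw [← proj_smul_of_norm_eq_one hω b, ← proj_add_proj_of_sqrt_two_smul h h', smul_add,
    ← Complex.ofReal_ofNat, ← Complex.ofReal_one, ← Complex.ofReal_div, Complex.coe_smul,
    Complex.coe_smul]
  exact convex_separable (separable_proj_tensorVec hu hv) (separable_proj_tensorVec hu' hv')
    (by norm_num) (by norm_num) (by norm_num)

noncomputable def equatorKet (ω : ℂ) : Fin 2 → ℂ := ![((√2 : ℝ) : ℂ)⁻¹, ω * ((√2 : ℝ) : ℂ)⁻¹]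

lemma separable_half_proj_bellBasis_add {i j : Fin 4} (hij : i ≠ j) :
    Separable ((1 / 2 : ℂ) • (proj (bellBasis i) + proj (bellBasis j))) := by
  wlog hlt : i < j generalizing i j
  · rw [add_comm]
    exact this hij.symm (lt_of_le_of_ne (not_lt.1 hlt) hij.symm)
  open Complex in
  (fin_cases i <;> fin_cases j <;> try exact absurd hlt (by decide)) <;> [
    refine separable_half_proj_add 1 ![1, 0] ![1, 0] ![0, 1] ![0, 1] ?_ ?_ ?_ ?_ ?_ ?_ ?_;
    refine separable_half_proj_add 1 (equatorKet 1) (equatorKet 1) (equatorKet (-1))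
      (equatorKet (-1)) ?_ ?_ ?_ ?_ ?_ ?_ ?_;
    refine separable_half_proj_add I (equatorKet (-I)) (equatorKet I) (equatorKet I)
      (equatorKet (-I)) ?_ ?_ ?_ ?_ ?_ ?_ ?_;
    refine separable_half_proj_add I (equatorKet I) (equatorKet I) (equatorKet (-I))
      (equatorKet (-I)) ?_ ?_ ?_ ?_ ?_ ?_ ?_;
    refine separable_half_proj_add 1 (equatorKet (-1)) (equatorKet 1) (equatorKet 1)
      (equatorKet (-1)) ?_ ?_ ?_ ?_ ?_ ?_ ?_;
    refine separable_half_proj_add 1 ![1, 0] ![0, 1] ![0, 1] ![1, 0] ?_ ?_ ?_ ?_ ?_ ?_ ?_]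
  all_goals
    simp [funext_iff, Prod.forall, Fin.forall_fin_two, tensorVec, equatorKet, bellBasis, ket]
  all_goals field_simp
  all_goals norm_num [← Complex.ofReal_pow]

noncomputable def pairMix {ι : Type*} [DecidableEq ι] (i j : ι) : ι → ℝ :=
  (1 / 2 : ℝ) • (Pi.single i 1 + Pi.single j 1)

lemma mem_convexHull_pairMix {lam : Fin 4 → ℝ} (h0 : ∀ i, 0 ≤ lam i) (hsum : ∑ i, lam i = 1)
    (hhalf : ∀ i, lam i ≤ 1 / 2) :
    lam ∈ convexHull ℝ {x | ∃ i j, i ≠ j ∧ x = pairMix i j} := by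
  rw [Fin.sum_univ_four] at hsum
  set t₁ := lam 0 - lam 1 + lam 2 - lam 3 with ht₁
  set t₂ := lam 1 + lam 2 - lam 0 - lam 3 with ht₂
  set t₃ := lam 0 + lam 1 - lam 2 - lam 3 with ht₃
  have hoct : |t₁| + |t₂| + |t₃| ≤ 1 := by
    rcases abs_cases t₁ with ⟨h₁, -⟩ | ⟨h₁, -⟩ <;> rcases abs_cases t₂ with ⟨h₂, -⟩ | ⟨h₂, -⟩ <;>
      rcases abs_cases t₃ with ⟨h₃, -⟩ | ⟨h₃, -⟩ <;>
      linarith [hhalf 0, hhalf 1, hhalf 2, hhalf 3, h0 0, h0 1, h0 2, h0 3]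
  set r := (1 - (|t₁| + |t₂| + |t₃|)) / 6 with hr_def
  have hr : 0 ≤ r := by linarith
  have hdecomp : lam = ∑ k, ![t₃⁺ + r, t₃⁻ + r, t₁⁺ + r, t₁⁻ + r, t₂⁺ + r, t₂⁻ + r] k •
      ![pairMix 0 1, pairMix 2 3, pairMix 0 2, pairMix 1 3, pairMix 1 2, pairMix 0 3] k := by
    funext c
    fin_cases c <;> simp [Fin.sum_univ_six, pairMix] <;>
      linarith [hr_def, posPart_sub_negPart t₁, posPart_sub_negPart t₂, posPart_sub_negPart t₃,
        posPart_add_negPart t₁, posPart_add_negPart t₂, posPart_add_negPart t₃]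
  rw [hdecomp]
  refine (convex_convexHull ℝ _).sum_mem (fun k _ => ?_) ?_ (fun k _ => subset_convexHull ℝ _ ?_)
  · fin_cases k <;> simp [add_nonneg, hr]
  · simp [Fin.sum_univ_six]
    linarith [posPart_add_negPart t₁, posPart_add_negPart t₂, posPart_add_negPart t₃]
  · fin_cases k <;> exact ⟨_, _, by decide, rfl⟩

noncomputable def bellDiagonal : (Fin 4 → ℝ) →ₗ[ℝ] Matrix (Fin 2 × Fin 2) (Fin 2 × Fin 2) ℂ :=
  Fintype.linearCombination ℝ fun i => proj (bellBasis i)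

lemma bellDiagonal_apply (lam : Fin 4 → ℝ) :
    bellDiagonal lam = ∑ i, (lam i : ℂ) • proj (bellBasis i) := by
  simp [bellDiagonal, Fintype.linearCombination_apply, Complex.coe_smul]

lemma bellDiagonal_pairMix (i j : Fin 4) :
    bellDiagonal (pairMix i j) = (1 / 2 : ℂ) • (proj (bellBasis i) + proj (bellBasis j)) := by
  simp [bellDiagonal, pairMix, Fintype.linearCombination_apply_single, ← Complex.coe_smul]

/-- A Bell-diagonal two-qubit state whose largest eigenvalue is at most `1/2`
is separable; in particular, any equal mixture of two distinct Bell states is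
separable. -/
theorem bell_diagonal_lambda_le_half_separable :
    (∀ lam : Fin 4 → ℝ, (∀ i, 0 ≤ lam i) → (∑ i, lam i = 1) →
      (∀ i, lam i ≤ 1 / 2) →
      Separable (∑ i, ((lam i : ℂ)) • proj (bellBasis i))) ∧
    (∀ i j : Fin 4, i ≠ j →
      Separable ((1 / 2 : ℂ) • (proj (bellBasis i) + proj (bellBasis j)))) := by
  refine ⟨fun lam h0 hsum hhalf => ?_, fun i j hij => separable_half_proj_bellBasis_add hij⟩
  have hpairs : bellDiagonal '' {x | ∃ i j, i ≠ j ∧ x = pairMix i j} ⊆ {ρ | Separable ρ} := by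
    rintro _ ⟨_, ⟨i, j, hij, rfl⟩, rfl⟩
    rw [Set.mem_ofPred_eq, bellDiagonal_pairMix]
    exact separable_half_proj_bellBasis_add hij
  rw [← bellDiagonal_apply]
  apply convexHull_min hpairs convex_separable
  rw [← LinearMap.image_convexHull]
  exact Set.mem_image_of_mem _ (mem_convexHull_pairMix h0 hsum hhalf)
end
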